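/- Let n_1 ≥ ... ≥ n_r and m_1 ≥ ... ≥ m_t be two partitions with conjugate parts n'_s = #{p : n_p ≥ s} and m'_s = #{q : m_q ≥ s}. Then Σ_{p=1}^{r} Σ_{q=1}^{t} min(2·n_p, m_q) = Σ_{s ≥ 1} n'_s · ( m'_{2s-1} + m'_{2s} ). -/

import Mathlib

/-!
Layer-cake decomposition: `min (2a) b` counts the `k ∈ [1, 2a]` with `k ≤ b`; grouping them in
pairs `{2s - 1, 2s}` gives one summand per `s ≤ a`. Summing over `p, q` and moving the sum over
`s` outside, the indicator of `s ≤ n_p` sums to `n'_s` and the pair counts to `m'_{2s-1} + m'_{2s}`.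
-/

open Finset

lemma min_two_mul_eq_sum_Icc (a b : ℕ) :
    min (2 * a) b =
      ∑ s ∈ Icc 1 a, ((if 2 * s - 1 ≤ b then 1 else 0) + (if 2 * s ≤ b then 1 else 0)) := by
  induction a with
  | zero => simp
  | succ a ih =>
    rw [sum_Icc_succ_top (by omega), ← ih]
    split_ifs <;> omega

lemma min_two_mul_eq_sum_Icc_of_le {a N : ℕ} (b : ℕ) (h : a ≤ N) :
    min (2 * a) b =
      ∑ s ∈ Icc 1 N, (if s ≤ a then 1 else 0) *
        ((if 2 * s - 1 ≤ b then 1 else 0) + (if 2 * s ≤ b then 1 else 0)) := by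
  have hfilter : (Icc 1 N).filter (· ≤ a) = Icc 1 a := by
    ext s
    simp only [mem_filter, mem_Icc]
    omega
  simp only [boole_mul]
  rw [← sum_filter, hfilter, min_two_mul_eq_sum_Icc]

theorem statement3_general (r t : ℕ) (n : Fin r → ℕ) (m : Fin t → ℕ) :
    ∑ p : Fin r, ∑ q : Fin t, min (2 * n p) (m q) =
      ∑ s ∈ Finset.Icc 1 (Finset.univ.sup n),
        ((Finset.univ.filter fun p : Fin r => s ≤ n p).card) *
          (((Finset.univ.filter fun q : Fin t => 2 * s - 1 ≤ m q).card) +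
            ((Finset.univ.filter fun q : Fin t => 2 * s ≤ m q).card)) := by
  calc ∑ p, ∑ q, min (2 * n p) (m q)
      = ∑ p, ∑ q, ∑ s ∈ Icc 1 (univ.sup n), (if s ≤ n p then 1 else 0) *
          ((if 2 * s - 1 ≤ m q then 1 else 0) + (if 2 * s ≤ m q then 1 else 0)) := by
        simp only [fun p q => min_two_mul_eq_sum_Icc_of_le (m q) (le_sup (mem_univ p) : n p ≤ _)]
    _ = _ := by
        simp only [card_filter, ← sum_add_distrib, sum_mul_sum]
        exact (sum_congr rfl fun p _ => sum_comm).trans sum_comm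

/-- For two partitions `n_1 ≥ … ≥ n_r` and `m_1 ≥ … ≥ m_t` with conjugate parts
`n'_s = #{p : n_p ≥ s}` and `m'_s = #{q : m_q ≥ s}`, we have
`Σ_p Σ_q min(2 n_p, m_q) = Σ_{s≥1} n'_s (m'_{2s-1} + m'_{2s})`. -/
theorem statement3 (r t : ℕ) (n : Fin r → ℕ) (m : Fin t → ℕ)
    (hnpos : ∀ p, 0 < n p) (hmpos : ∀ q, 0 < m q)
    (hndec : ∀ p q : Fin r, p ≤ q → n q ≤ n p)
    (hmdec : ∀ p q : Fin t, p ≤ q → m q ≤ m p) :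
    ∑ p : Fin r, ∑ q : Fin t, min (2 * n p) (m q) =
      ∑ s ∈ Finset.Icc 1 (Finset.univ.sup n),
        ((Finset.univ.filter fun p : Fin r => s ≤ n p).card) *
          (((Finset.univ.filter fun q : Fin t => 2 * s - 1 ≤ m q).card) +
            ((Finset.univ.filter fun q : Fin t => 2 * s ≤ m q).card)) :=
  statement3_general r t n m
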